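/- arXiv:1811.10518 — 3 statements merged into one kernel-verified Lean document; each statement's English description precedes it below -/
import Mathlib

section
/- Let M and N be subspaces of ℂ^n in generic position (i.e., M∩N = M∩N^⊥ = M^⊥∩N = M^⊥∩N^⊥ = {0}). Then the pair (M, N) is unitarily equivalent to the pair (M^⊥, N^⊥): there exists a unitary operator U on ℂ^n with U(M) = M^⊥ and U(N) = N^⊥. -/
/-!
Let `P`, `Q` be the orthogonal projections onto `M`, `N`. The commutator `K = QP - PQ` satisfies
`K P = (1 - P) K` and `K Q = (1 - Q) K`, and it factors as `K = (P - (1 - Q)) (P - Q)`. Generic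
position says exactly that both factors are injective, so `K` is invertible. Taking adjoints in the
intertwining relations shows that `K* K` commutes with `P` and `Q`, hence so does `(K* K)^(-1/2)`,
and the unitary factor `K (K* K)^(-1/2)` of the polar decomposition of `K` carries `M` onto `Mᗮ`
and `N` onto `Nᗮ`.
-/

open CFC

section PolarUnitary

variable {A : Type*} [CStarAlgebra A] [PartialOrder A] [StarOrderedRing A]

noncomputable def polarUnitary (t : A) : A := t * (star t * t) ^ (-(1 / 2) : ℝ)

lemma polarUnitary_mem_unitary {t : A} (ht : IsUnit t) : polarUnitary t ∈ unitary A := by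
  have hpos : IsStrictlyPositive (star t * t) :=
    CStarAlgebra.isStrictlyPositive_iff_eq_star_mul_self.mpr ⟨t, ht, rfl⟩
  have hr := IsStrictlyPositive.rpow _ (-(1 / 2)) hpos
  refine (ht.mul hr.isUnit).mem_unitary_of_star_mul_self ?_
  rw [star_mul, rpow_nonneg.isSelfAdjoint.star_eq, mul_assoc,
    ← mul_assoc (star t), ← mul_assoc]
  generalize star t * t = a at hpos ⊢
  calc a ^ (-(1 / 2) : ℝ) * a * a ^ (-(1 / 2) : ℝ)
      = a ^ (-(1 / 2) : ℝ) * a ^ (1 : ℝ) * a ^ (-(1 / 2) : ℝ) := by rw [rpow_one a hpos.nonneg]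
    _ = a ^ (-(1 / 2) + 1 + -(1 / 2) : ℝ) := by rw [rpow_add hpos.isUnit, rpow_add hpos.isUnit]
    _ = 1 := by norm_num [rpow_zero a hpos.nonneg]

lemma polarUnitary_mul_eq_mul_polarUnitary {t a b : A} (ha : IsSelfAdjoint a)
    (hb : IsSelfAdjoint b) (h : t * a = b * t) : polarUnitary t * a = b * polarUnitary t := by
  have hcomm : Commute (star t * t) a := by
    have h' : a * star t = star t * b := by simpa [ha.star_eq, hb.star_eq] using congrArg star h
    show star t * t * a = a * (star t * t)
    rw [mul_assoc, h, ← mul_assoc, ← h', mul_assoc]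
  have hr : Commute ((star t * t) ^ (-(1 / 2) : ℝ)) a := hcomm.cfc_nnreal _
  rw [polarUnitary, mul_assoc, hr.eq, ← mul_assoc, h, mul_assoc]

end PolarUnitary

lemma IsIdempotentElem.commutator_mul_eq_one_sub_mul_commutator {R : Type*} [Ring R] {p : R}
    (hp : IsIdempotentElem p) (q : R) : (q * p - p * q) * p = (1 - p) * (q * p - p * q) := by
  calc (q * p - p * q) * p = (1 - p) * (q * p - p * q) + q * (p * p - p) - (p * p - p) * q := by
        noncomm_ring
    _ = (1 - p) * (q * p - p * q) := by rw [hp.eq, sub_self, mul_zero, zero_mul, add_zero, sub_zero]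

lemma IsIdempotentElem.commutator_eq_sub_mul_sub {R : Type*} [Ring R] {p q : R}
    (hp : IsIdempotentElem p) (hq : IsIdempotentElem q) :
    q * p - p * q = (p - (1 - q)) * (p - q) := by
  calc q * p - p * q = (p - (1 - q)) * (p - q) - (p * p - p) + (q * q - q) := by noncomm_ring
    _ = (p - (1 - q)) * (p - q) := by rw [hp.eq, hq.eq, sub_self, sub_self, sub_zero, add_zero]

namespace Submodule

variable {𝕜 E : Type*} [RCLike 𝕜] [NormedAddCommGroup E] [InnerProductSpace 𝕜 E]

lemma injective_starProjection_sub_starProjection {M N : Submodule 𝕜 E}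
    [M.HasOrthogonalProjection] [N.HasOrthogonalProjection] (h : M ⊓ N = ⊥)
    (h' : Mᗮ ⊓ Nᗮ = ⊥) : Function.Injective ⇑(M.starProjection - N.starProjection) := by
  refine (injective_iff_map_eq_zero _).mpr fun x hx => ?_
  have hPQ : M.starProjection x = N.starProjection x := sub_eq_zero.mp hx
  have hP : M.starProjection x = 0 := by
    have hmem : M.starProjection x ∈ M ⊓ N :=
      ⟨starProjection_apply_mem M x, hPQ ▸ starProjection_apply_mem N x⟩
    rwa [h, mem_bot] at hmem
  have hmem : x ∈ Mᗮ ⊓ Nᗮ :=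
    ⟨(starProjection_apply_eq_zero_iff M).mp hP,
      (starProjection_apply_eq_zero_iff N).mp (hPQ ▸ hP)⟩
  rwa [h', mem_bot] at hmem

lemma map_eq_of_apply_starProjection {M M' : Submodule 𝕜 E}
    [M.HasOrthogonalProjection] [M'.HasOrthogonalProjection] (U : E ≃ₗᵢ[𝕜] E)
    (hU : ∀ x, U (M.starProjection x) = M'.starProjection (U x)) :
    M.map (U : E →ₗ[𝕜] E) = M' := by
  refine le_antisymm ?_ fun y hy => ⟨U.symm y, ?_, U.apply_symm_apply y⟩
  · rintro _ ⟨x, hx, rfl⟩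
    rw [SetLike.mem_coe, ← starProjection_eq_self_iff] at hx
    rw [← starProjection_eq_self_iff]
    exact (hU x).symm.trans (congrArg U hx)
  · rw [SetLike.mem_coe, ← starProjection_eq_self_iff]
    apply U.injective
    rw [hU, U.apply_symm_apply, starProjection_eq_self_iff.mpr hy]

end Submodule

section GenericPosition

variable {E : Type*} [NormedAddCommGroup E] [InnerProductSpace ℂ E] [FiniteDimensional ℂ E]

lemma isUnit_starProjection_sub_starProjection {M N : Submodule ℂ E} (h : M ⊓ N = ⊥)
    (h' : Mᗮ ⊓ Nᗮ = ⊥) : IsUnit (M.starProjection - N.starProjection) := by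
  rw [ContinuousLinearMap.isUnit_iff_isUnit_toLinearMap, LinearMap.isUnit_iff_ker_eq_bot,
    LinearMap.ker_eq_bot]
  exact Submodule.injective_starProjection_sub_starProjection h h'

theorem exists_linearIsometryEquiv_map_eq_orthogonal_of_generic {M N : Submodule ℂ E}
    (h1 : M ⊓ N = ⊥) (h2 : M ⊓ Nᗮ = ⊥) (h3 : Mᗮ ⊓ N = ⊥) (h4 : Mᗮ ⊓ Nᗮ = ⊥) :
    ∃ U : E ≃ₗᵢ[ℂ] E, M.map (U : E →ₗ[ℂ] E) = Mᗮ ∧ N.map (U : E →ₗ[ℂ] E) = Nᗮ := by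
  set P := M.starProjection
  set Q := N.starProjection
  have hK : Q * P - P * Q = (P - Nᗮ.starProjection) * (P - Q) := by
    rw [Submodule.starProjection_orthogonal']
    exact M.isIdempotentElem_starProjection.commutator_eq_sub_mul_sub
      N.isIdempotentElem_starProjection
  have hKP : (Q * P - P * Q) * P = Mᗮ.starProjection * (Q * P - P * Q) := by
    rw [Submodule.starProjection_orthogonal']
    exact M.isIdempotentElem_starProjection.commutator_mul_eq_one_sub_mul_commutator Q
  have hKQ : (Q * P - P * Q) * Q = Nᗮ.starProjection * (Q * P - P * Q) := by
    rw [Submodule.starProjection_orthogonal', ← neg_sub, neg_mul, mul_neg,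
      N.isIdempotentElem_starProjection.commutator_mul_eq_one_sub_mul_commutator P]
  have hunit : IsUnit (Q * P - P * Q) := by
    rw [hK]
    refine (isUnit_starProjection_sub_starProjection h2 ?_).mul
      (isUnit_starProjection_sub_starProjection h1 h4)
    rwa [Submodule.orthogonal_orthogonal]
  let U := Unitary.linearIsometryEquiv ⟨_, polarUnitary_mem_unitary hunit⟩
  refine ⟨U, M.map_eq_of_apply_starProjection U fun x => ?_,
    N.map_eq_of_apply_starProjection U fun x => ?_⟩
  · exact congr($(polarUnitary_mul_eq_mul_polarUnitary (isSelfAdjoint_starProjection M)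
      (isSelfAdjoint_starProjection Mᗮ) hKP) x)
  · exact congr($(polarUnitary_mul_eq_mul_polarUnitary (isSelfAdjoint_starProjection N)
      (isSelfAdjoint_starProjection Nᗮ) hKQ) x)

end GenericPosition

/-- If subspaces `M` and `N` of `ℂⁿ` are in generic position, then the pair
`(M, N)` is unitarily equivalent to the pair `(Mᗮ, Nᗮ)`. -/
theorem generic_position_unitarily_equivalent_to_perps {n : ℕ}
    (M N : Submodule ℂ (EuclideanSpace ℂ (Fin n)))
    (h1 : M ⊓ N = ⊥) (h2 : M ⊓ Nᗮ = ⊥) (h3 : Mᗮ ⊓ N = ⊥) (h4 : Mᗮ ⊓ Nᗮ = ⊥) :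
    ∃ U : EuclideanSpace ℂ (Fin n) ≃ₗᵢ[ℂ] EuclideanSpace ℂ (Fin n),
      M.map (U : EuclideanSpace ℂ (Fin n) →ₗ[ℂ] EuclideanSpace ℂ (Fin n)) = Mᗮ ∧
      N.map (U : EuclideanSpace ℂ (Fin n) →ₗ[ℂ] EuclideanSpace ℂ (Fin n)) = Nᗮ :=
  exists_linearIsometryEquiv_map_eq_orthogonal_of_generic h1 h2 h3 h4
end

section
/- If P and Q are orthogonal projections onto subspaces M and N of ℂ^n, then ‖P + Q‖ = 1 + ‖PQ‖ (operator norm), provided P + Q ≠ 0. -/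
/-- The orthogonal projection onto a subspace `K` of `ℂⁿ`, as an operator on `ℂⁿ`. -/
noncomputable def projCLM {n : ℕ} (K : Submodule ℂ (EuclideanSpace ℂ (Fin n))) :
    EuclideanSpace ℂ (Fin n) →L[ℂ] EuclideanSpace ℂ (Fin n) :=
  K.subtypeL.comp (K.orthogonalProjectionOnto)

/-!
Both `P + Q` and `QPQ = (PQ)⋆(PQ)` are positive, so in finite dimension their norms are
eigenvalues. If `(P + Q)x = μx`, then `PQ(Qx) = (μ - 1)Px` and `QP(Px) = (μ - 1)Qx`; adding the
two norm estimates and using `‖Px‖ + ‖Qx‖ ≥ μ‖x‖` gives `μ ≤ 1 + ‖PQ‖`. Conversely, if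
`QPQu = c²u` with `c = ‖PQ‖ > 0`, then `Qu = u`, and `w = cu + Pu` satisfies
`(P + Q)w = (1 + c)w`. When `PQ = 0`, `0 ≤ P ≤ P + Q` gives `‖P + Q‖ ≥ ‖P‖ = 1`.
-/

theorem IsStarProjection.norm_eq_one {A : Type*} [NormedRing A] [StarRing A] [CStarRing A]
    {e : A} (he : IsStarProjection e) (he0 : e ≠ 0) : ‖e‖ = 1 := by
  have h : ‖e‖ * ‖e‖ = ‖e‖ := by
    rw [← CStarRing.norm_star_mul_self, he.isSelfAdjoint.star_eq, he.isIdempotentElem.eq]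
  exact (mul_eq_right₀ (norm_ne_zero_iff.mpr he0)).mp h

theorem IsSelfAdjoint.norm_mul_comm {A : Type*} [NonUnitalNormedRing A] [StarRing A]
    [NormedStarGroup A] {a b : A} (ha : IsSelfAdjoint a) (hb : IsSelfAdjoint b) :
    ‖b * a‖ = ‖a * b‖ := by
  rw [← norm_star (a * b), star_mul, ha.star_eq, hb.star_eq]

theorem Submodule.starProjection_ne_zero {𝕜 E : Type*} [RCLike 𝕜] [NormedAddCommGroup E]
    [InnerProductSpace 𝕜 E] {K : Submodule 𝕜 E} [K.HasOrthogonalProjection] (hK : K ≠ ⊥) :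
    K.starProjection ≠ 0 := fun h => by
  simpa [h] using K.norm_starProjection hK

theorem ContinuousLinearMap.mul_apply_apply_eq_of_add_apply_eq_smul {R M : Type*} [CommRing R]
    [AddCommGroup M] [TopologicalSpace M] [IsTopologicalAddGroup M] [Module R M]
    [ContinuousConstSMul R M] {P Q : M →L[R] M} (hP : IsIdempotentElem P)
    (hQ : IsIdempotentElem Q) {μ : R} {x : M} (hx : P x + Q x = μ • x) :
    (P * Q) (Q x) = (μ - 1) • P x := by
  have hPx : P x + P (Q x) = μ • P x := calc
    P x + P (Q x) = P (P x + Q x) := by rw [map_add, ← mul_apply_eq_comp P P, hP.eq]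
    _ = μ • P x := by rw [hx, map_smul]
  rw [mul_apply_eq_comp, ← mul_apply_eq_comp Q Q, hQ.eq, sub_smul, one_smul, ← hPx,
    add_sub_cancel_left]

section FiniteDimensional

open ContinuousLinearMap

variable {E : Type*} [NormedAddCommGroup E] [InnerProductSpace ℂ E] [FiniteDimensional ℂ E]

theorem ContinuousLinearMap.exists_apply_eq_norm_smul_of_nonneg [Nontrivial E] {T : E →L[ℂ] E}
    (hT : 0 ≤ T) : ∃ x ≠ 0, T x = (‖T‖ : ℂ) • x := by
  have hspec : (‖T‖ : ℂ) ∈ spectrum ℂ (T : Module.End ℂ E) := by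
    rw [← ContinuousLinearMap.spectrum_eq]
    exact spectrum.algebraMap_mem ℂ (CStarAlgebra.norm_mem_spectrum_of_nonneg hT)
  obtain ⟨x, hx⟩ := (Module.End.hasEigenvalue_iff_mem_spectrum.mpr hspec).exists_hasEigenvector
  exact ⟨x, hx.2, hx.apply_eq_smul⟩

namespace IsStarProjection

variable {P Q : E →L[ℂ] E}

theorem norm_add_le_one_add_norm_mul (hP : IsStarProjection P) (hQ : IsStarProjection Q) :
    ‖P + Q‖ ≤ 1 + ‖P * Q‖ := by
  nontriviality E
  obtain ⟨x, hx0, hx⟩ := exists_apply_eq_norm_smul_of_nonneg (add_nonneg hP.nonneg hQ.nonneg)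
  set μ := ‖P + Q‖
  set c := ‖P * Q‖
  have hPQ : P x + Q x = (μ : ℂ) • x := hx
  have hQP : Q x + P x = (μ : ℂ) • x := by rw [add_comm, hPQ]
  have hμ : ‖((μ : ℂ) - 1)‖ = |μ - 1| := by norm_cast
  have hP_le : (μ - 1) * ‖P x‖ ≤ c * ‖Q x‖ := calc
    (μ - 1) * ‖P x‖ ≤ ‖(P * Q) (Q x)‖ := by
      rw [mul_apply_apply_eq_of_add_apply_eq_smul hP.isIdempotentElem hQ.isIdempotentElem hPQ,
        norm_smul, hμ]
      gcongr
      exact le_abs_self _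
    _ ≤ c * ‖Q x‖ := le_opNorm _ _
  have hQ_le : (μ - 1) * ‖Q x‖ ≤ c * ‖P x‖ := calc
    (μ - 1) * ‖Q x‖ ≤ ‖(Q * P) (P x)‖ := by
      rw [mul_apply_apply_eq_of_add_apply_eq_smul hQ.isIdempotentElem hP.isIdempotentElem hQP,
        norm_smul, hμ]
      gcongr
      exact le_abs_self _
    _ ≤ ‖Q * P‖ * ‖P x‖ := le_opNorm _ _
    _ = c * ‖P x‖ := by rw [hP.isSelfAdjoint.norm_mul_comm hQ.isSelfAdjoint]
  have hsum : μ * ‖x‖ ≤ ‖P x‖ + ‖Q x‖ := calc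
    μ * ‖x‖ = ‖P x + Q x‖ := by
      rw [hPQ, norm_smul, Complex.norm_real, Real.norm_of_nonneg (norm_nonneg _)]
    _ ≤ ‖P x‖ + ‖Q x‖ := norm_add_le _ _
  by_contra! hlt
  have hμ_pos : 0 < μ := by linarith [norm_nonneg (P * Q)]
  have hs_pos : 0 < ‖P x‖ + ‖Q x‖ := (mul_pos hμ_pos (norm_pos_iff.mpr hx0)).trans_le hsum
  have hμc : (μ - 1) * (‖P x‖ + ‖Q x‖) ≤ c * (‖P x‖ + ‖Q x‖) := by linarith
  linarith [le_of_mul_le_mul_right hμc hs_pos]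

theorem exists_add_apply_eq_one_add_norm_mul_smul (hP : IsStarProjection P)
    (hQ : IsStarProjection Q) (hPQ : P * Q ≠ 0) :
    ∃ w ≠ 0, (P + Q) w = ((1 + ‖P * Q‖ : ℝ) : ℂ) • w := by
  have : Nontrivial E :=
    (subsingleton_or_nontrivial E).resolve_left fun _ => hPQ (Subsingleton.elim _ _)
  set c := ‖P * Q‖
  have hc : ((c * c : ℝ) : ℂ) ≠ 0 := by simpa [c] using hPQ
  have hT : Q * P * Q = star (P * Q) * (P * Q) := by
    rw [star_mul, hP.isSelfAdjoint.star_eq, hQ.isSelfAdjoint.star_eq, ← mul_assoc,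
      mul_assoc Q P P, hP.isIdempotentElem.eq]
  obtain ⟨u, hu0, hu⟩ := exists_apply_eq_norm_smul_of_nonneg (star_mul_self_nonneg (P * Q))
  rw [CStarRing.norm_star_mul_self, ← hT] at hu
  have hPPu : P (P u) = P u := by rw [← mul_apply_eq_comp P P, hP.isIdempotentElem.eq]
  have hQu : Q u = u := by
    have h : Q ((Q * P * Q) u) = (Q * P * Q) u := by
      rw [← mul_apply_eq_comp Q, ← mul_assoc, ← mul_assoc, hQ.isIdempotentElem.eq]
    rw [hu, map_smul] at h
    exact smul_right_injective E hc h
  have hQPu : Q (P u) = ((c * c : ℝ) : ℂ) • u := by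
    rw [← hu, mul_apply_eq_comp, mul_apply_eq_comp, hQu]
  refine ⟨(c : ℂ) • u + P u, fun hw => hu0 ?_, ?_⟩
  · have hPu : P u = 0 := by
      have h : ((c : ℂ) + 1) • P u = 0 := calc
        ((c : ℂ) + 1) • P u = P ((c : ℂ) • u + P u) := by
          rw [map_add, map_smul, hPPu, add_smul, one_smul]
        _ = 0 := by rw [hw, map_zero]
      exact (smul_eq_zero.mp h).resolve_left (by norm_cast; positivity)
    have h := hQPu
    rw [hPu, map_zero] at h
    exact (smul_eq_zero.mp h.symm).resolve_left hc
  · rw [add_apply, map_add, map_add, map_smul, map_smul, hPPu, hQPu, hQu]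
    push_cast
    module

theorem one_add_norm_mul_le_norm_add (hP : IsStarProjection P) (hQ : IsStarProjection Q)
    (hP0 : P ≠ 0) : 1 + ‖P * Q‖ ≤ ‖P + Q‖ := by
  by_cases hPQ : P * Q = 0
  · rw [hPQ, norm_zero, add_zero, ← hP.norm_eq_one hP0]
    exact CStarAlgebra.norm_le_norm_of_nonneg_of_le hP.nonneg (le_add_of_nonneg_right hQ.nonneg)
  obtain ⟨w, hw0, hw⟩ := exists_add_apply_eq_one_add_norm_mul_smul hP hQ hPQ
  have h := (P + Q).le_opNorm w
  rw [hw, norm_smul, Complex.norm_real, Real.norm_of_nonneg (by positivity)] at h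
  exact le_of_mul_le_mul_right h (norm_pos_iff.mpr hw0)

end IsStarProjection

end FiniteDimensional

/-- For orthogonal projections `P`, `Q` onto subspaces `M`, `N` of `ℂⁿ`
(not both zero), one has `‖P + Q‖ = 1 + ‖P Q‖`. -/
theorem norm_add_of_orthogonalProjections {n : ℕ}
    (M N : Submodule ℂ (EuclideanSpace ℂ (Fin n))) (h : M ≠ ⊥ ∨ N ≠ ⊥) :
    ‖projCLM M + projCLM N‖ = 1 + ‖(projCLM M).comp (projCLM N)‖ := by
  have hM : IsStarProjection (projCLM M) := isStarProjection_starProjection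
  have hN : IsStarProjection (projCLM N) := isStarProjection_starProjection
  change _ = 1 + ‖projCLM M * projCLM N‖
  refine le_antisymm (hM.norm_add_le_one_add_norm_mul hN) ?_
  rcases h with hM0 | hN0
  · exact hM.one_add_norm_mul_le_norm_add hN (Submodule.starProjection_ne_zero hM0)
  · rw [add_comm (projCLM M), ← hM.isSelfAdjoint.norm_mul_comm hN.isSelfAdjoint]
    exact hN.one_add_norm_mul_le_norm_add hM (Submodule.starProjection_ne_zero hN0)
end

section
/- Let M, N be subspaces of ℂ^n with orthogonal projections P_M, P_N. Writing P_M = P_{M∩N} + P_{M∩N^⊥} + P_{R_M} and P_N = P_{M∩N} + P_{M^⊥∩N} + P_{R_N} where R is the orthogonal complement of (M∩N) ⊕ (M∩N^⊥) ⊕ (M^⊥∩N) ⊕ (M^⊥∩N^⊥), R_M = M∩R, R_N = N∩R, one has P_M P_N = P_{M∩N} + P_{R_M} P_{R_N}, where the two summands act on orthogonal subspaces (so P_M P_N = P_{M∩N} ⊕ P_{R_M} P_{R_N}). -/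
/-!
`M` splits orthogonally as `(M ⊓ N) ⊕ (M ⊓ Nᗮ) ⊕ (M ⊓ R)` and `N` as
`(M ⊓ N) ⊕ (Mᗮ ⊓ N) ⊕ (N ⊓ R)`. Expanding `P_M P_N` along these splittings, every product of
projections onto mutually orthogonal pieces vanishes, leaving `P_{M ⊓ N} P_N = P_{M ⊓ N}` and
`P_{M ⊓ R} P_{N ⊓ R}`. The two survivors live on `M ⊓ N` and on `R`, which are orthogonal because
`M ⊓ N` is one of the four pieces whose sum `R` is the complement of.
-/

open scoped ComplexInnerProductSpace

namespace Submodule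

variable {𝕜 E : Type*} [RCLike 𝕜] [NormedAddCommGroup E] [InnerProductSpace 𝕜 E]

theorem starProjection_sup_of_isOrtho {U V : Submodule 𝕜 E} [U.HasOrthogonalProjection]
    [V.HasOrthogonalProjection] [(U ⊔ V).HasOrthogonalProjection] (h : U ⟂ V) :
    (U ⊔ V).starProjection = U.starProjection + V.starProjection := by
  ext x
  rw [add_apply]
  refine eq_starProjection_of_mem_orthogonal
    (add_mem (mem_sup_left (U.starProjection_apply_mem x))
      (mem_sup_right (V.starProjection_apply_mem x))) ?_
  rw [← inf_orthogonal]
  constructor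
  · rw [← sub_sub]
    exact sub_mem (sub_starProjection_mem_orthogonal x) (h.ge (V.starProjection_apply_mem x))
  · rw [add_comm, ← sub_sub]
    exact sub_mem (sub_starProjection_mem_orthogonal x) (h.le (U.starProjection_apply_mem x))

/-- The subspace `R`, on which `M` and `N` are in generic position. -/
def genericPart (M N : Submodule 𝕜 E) : Submodule 𝕜 E :=
  (M ⊓ N ⊔ M ⊓ Nᗮ ⊔ Mᗮ ⊓ N ⊔ Mᗮ ⊓ Nᗮ)ᗮ

variable (M N : Submodule 𝕜 E)

theorem genericPart_comm : genericPart M N = genericPart N M := by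
  rw [genericPart, genericPart, inf_comm N M, inf_comm N Mᗮ, inf_comm Nᗮ M, inf_comm Nᗮ Mᗮ,
    sup_right_comm (M ⊓ N)]

theorem isOrtho_inf_genericPart : M ⊓ N ⟂ genericPart M N :=
  isOrtho_orthogonal_right _ |>.mono_left (le_sup_left.trans (le_sup_left.trans le_sup_left))

theorem inf_genericPart : M ⊓ genericPart M N = (M ⊓ N ⊔ M ⊓ Nᗮ)ᗮ ⊓ M := by
  have hM : Mᗮ ⊓ N ⊔ Mᗮ ⊓ Nᗮ ≤ Mᗮ := sup_le inf_le_left inf_le_left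
  have hM' : M ≤ (Mᗮ ⊓ N ⊔ Mᗮ ⊓ Nᗮ)ᗮ := le_orthogonal_orthogonal M |>.trans (orthogonal_le hM)
  rw [genericPart, sup_assoc _ (Mᗮ ⊓ N), ← inf_orthogonal, inf_comm, inf_assoc,
    inf_eq_right.mpr hM']

variable [FiniteDimensional 𝕜 E]

theorem sup_sup_inf_genericPart : M ⊓ N ⊔ M ⊓ Nᗮ ⊔ M ⊓ genericPart M N = M := by
  rw [inf_genericPart]
  exact sup_orthogonal_inf_of_hasOrthogonalProjection (sup_le inf_le_left inf_le_left)

theorem starProjection_eq_add_add_genericPart :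
    M.starProjection = (M ⊓ N).starProjection + (M ⊓ Nᗮ).starProjection +
      (M ⊓ genericPart M N).starProjection := by
  have hN : M ⊓ N ⟂ M ⊓ Nᗮ := (isOrtho_orthogonal_right N).mono inf_le_right inf_le_right
  have hR : M ⊓ N ⊔ M ⊓ Nᗮ ⟂ M ⊓ genericPart M N := by
    refine isOrtho_sup_left.mpr ⟨(isOrtho_inf_genericPart M N).mono_right inf_le_right, ?_⟩
    rw [inf_genericPart]
    exact (isOrtho_orthogonal_right _).mono le_sup_right inf_le_left
  conv_lhs => rw [← sup_sup_inf_genericPart M N]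
  rw [starProjection_sup_of_isOrtho hR, starProjection_sup_of_isOrtho hN]

end Submodule

open Submodule ContinuousLinearMap

theorem projCLM_eq_starProjection {n : ℕ} (K : Submodule ℂ (EuclideanSpace ℂ (Fin n))) :
    projCLM K = K.starProjection :=
  rfl

/-- Let `R` be the orthogonal complement of `(M∩N) ⊕ (M∩Nᗮ) ⊕ (Mᗮ∩N) ⊕ (Mᗮ∩Nᗮ)`,
`R_M = M∩R`, `R_N = N∩R`. Then `P_M P_N = P_{M∩N} + P_{R_M} P_{R_N}`, and the two
summands act on the mutually orthogonal subspaces `M∩N` and `R`. -/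
theorem product_projections_decomposition {n : ℕ}
    (M N R RM RN : Submodule ℂ (EuclideanSpace ℂ (Fin n)))
    (hR : R = ((M ⊓ N) ⊔ (M ⊓ Nᗮ) ⊔ (Mᗮ ⊓ N) ⊔ (Mᗮ ⊓ Nᗮ))ᗮ)
    (hRM : RM = M ⊓ R) (hRN : RN = N ⊓ R) :
    (projCLM M).comp (projCLM N) =
      projCLM (M ⊓ N) + (projCLM RM).comp (projCLM RN) ∧
    ∀ x ∈ M ⊓ N, ∀ y ∈ R, ⟪x, y⟫ = 0 := by
  obtain rfl : R = genericPart M N := hR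
  subst hRM hRN
  refine ⟨?_, fun x hx y hy ↦ (isOrtho_inf_genericPart M N).inner_eq hx hy⟩
  have hN := starProjection_eq_add_add_genericPart N M
  simp only [inf_comm N M, inf_comm N Mᗮ, genericPart_comm N M] at hN
  have h₁ : M ⊓ Nᗮ ⟂ N := (isOrtho_orthogonal_left N).mono_left inf_le_right
  have h₂ : M ⊓ genericPart M N ⟂ M ⊓ N :=
    ((isOrtho_inf_genericPart M N).mono_right inf_le_right).symm
  have h₃ : M ⊓ genericPart M N ⟂ Mᗮ ⊓ N :=
    (isOrtho_orthogonal_right M).mono inf_le_left inf_le_left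
  simp only [projCLM_eq_starProjection]
  calc M.starProjection ∘L N.starProjection
      = (M ⊓ N).starProjection + (M ⊓ genericPart M N).starProjection ∘L N.starProjection := by
        rw [starProjection_eq_add_add_genericPart M N, add_comp, add_comp,
          starProjection_comp_starProjection_of_le inf_le_right,
          h₁.starProjection_comp_starProjection, add_zero]
    _ = (M ⊓ N).starProjection +
          (M ⊓ genericPart M N).starProjection ∘L (N ⊓ genericPart M N).starProjection := by
        rw [hN, comp_add, comp_add, h₂.starProjection_comp_starProjection,
          h₃.starProjection_comp_starProjection, zero_add, zero_add]
end
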